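/- There exists a finite constant C (depending only on m and r̃_1,…,r̃_m) such that for all 0 ≤ t ≤ t' < ∞ and all x ∈ ℤ: p_t(x) ≤ e^{C (t'−t)} p_{t'}(x). -/

import Mathlib

open Finset

/-- `φ(θ) := Σ_{k=1}^m r̃_k (1 − cos(kθ))`. -/
noncomputable def phiFn (m : ℕ) (r : ℕ → ℝ) (θ : ℝ) : ℝ :=
  ∑ k ∈ Finset.Icc 1 m, r k * (1 - Real.cos (k * θ))

/-- The semi-discrete heat kernel
`p_t(x) := (2π)⁻¹ ∫_{−π}^{π} e^{−ixθ} e^{−tφ(θ)} dθ`, a real number since `φ` is even. -/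
noncomputable def hk (m : ℕ) (r : ℕ → ℝ) (t : ℝ) (x : ℤ) : ℝ :=
  ((2 * (Real.pi : ℂ))⁻¹ * ∫ θ in (-Real.pi)..Real.pi,
      Complex.exp (-(x : ℂ) * Complex.I * (θ : ℂ)) *
        Complex.exp (-(t : ℂ) * ((phiFn m r θ : ℝ) : ℂ))).re

/-! Write `φ = R - ψ` with `R = ∑ r̃_k` and `ψ(θ) = ∑ r̃_k cos(kθ)`. Then
`2π e^{tR} p_t(x) = ∫ cos(xθ) e^{tψ(θ)} dθ = ∑ₙ tⁿ/n! ∫ cos(xθ) ψ(θ)ⁿ dθ`, and by the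
product-to-sum formula each cosine coefficient of `ψⁿ⁺¹` is a nonnegative combination of those
of `ψⁿ`, hence nonnegative. So `t ↦ e^{tR} p_t(x)` is nondecreasing on `[0, ∞)`, which is the
claim with `C = R`. -/

open Real

theorem Real.hasSum_pow_div_factorial_exp (x : ℝ) :
    HasSum (fun n : ℕ => x ^ n / n.factorial) (exp x) := by
  rw [Real.exp_eq_exp_ℝ]
  exact NormedSpace.expSeries_div_hasSum_exp x

theorem hasSum_intervalIntegral_mul_exp {f g : ℝ → ℝ} (hf : Continuous f) (hg : Continuous g)
    (a b s : ℝ) :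
    HasSum (fun n : ℕ => s ^ n / n.factorial * ∫ θ in a..b, g θ * f θ ^ n)
      (∫ θ in a..b, g θ * exp (s * f θ)) := by
  have hterm (n : ℕ) (θ : ℝ) :
      s ^ n / n.factorial * (g θ * f θ ^ n) = g θ * ((s * f θ) ^ n / n.factorial) := by
    rw [mul_pow]; ring
  simp_rw [← intervalIntegral.integral_const_mul, hterm]
  refine intervalIntegral.hasSum_integral_of_dominated_convergence
    (fun n θ => |g θ| * ((|s| * |f θ|) ^ n / n.factorial)) (fun n => ?_) (fun n => ?_)
    (.of_forall fun θ _ => (Real.summable_pow_div_factorial _).mul_left _) ?_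
    (.of_forall fun θ _ => (Real.hasSum_pow_div_factorial_exp _).mul_left _)
  · fun_prop
  · refine .of_forall fun θ _ => ?_
    simp only [norm_mul, norm_div, norm_pow, Real.norm_eq_abs, Nat.abs_cast, le_refl]
  · simp_rw [tsum_mul_left, (Real.hasSum_pow_div_factorial_exp _).tsum_eq]
    exact Continuous.intervalIntegrable (by fun_prop) _ _

theorem monotoneOn_intervalIntegral_mul_exp {f g : ℝ → ℝ} (hf : Continuous f) (hg : Continuous g)
    {a b : ℝ} (hcoeff : ∀ n : ℕ, 0 ≤ ∫ θ in a..b, g θ * f θ ^ n) :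
    MonotoneOn (fun s => ∫ θ in a..b, g θ * exp (s * f θ)) (Set.Ici 0) := by
  intro s (hs : 0 ≤ s) s' _ hss'
  refine hasSum_le (fun n => ?_) (hasSum_intervalIntegral_mul_exp hf hg a b s)
    (hasSum_intervalIntegral_mul_exp hf hg a b s')
  have := hcoeff n
  gcongr

noncomputable def cosCoeff (f : ℝ → ℝ) (x : ℤ) : ℝ :=
  ∫ θ in -π..π, cos (x * θ) * f θ

theorem cosCoeff_one_nonneg (x : ℤ) : 0 ≤ cosCoeff (fun _ => 1) x := by
  rcases eq_or_ne x 0 with rfl | hx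
  · simp [cosCoeff, pi_nonneg]
  · have hx' : (x : ℝ) ≠ 0 := Int.cast_ne_zero.mpr hx
    simp [cosCoeff, intervalIntegral.integral_comp_mul_left (fun θ => cos θ) hx', integral_cos,
      sin_int_mul_pi]

theorem cosCoeff_cos_mul {f : ℝ → ℝ} (hf : Continuous f) (k x : ℤ) :
    cosCoeff (fun θ => cos (k * θ) * f θ) x = (cosCoeff f (x - k) + cosCoeff f (x + k)) / 2 := by
  have hprod (θ : ℝ) : cos (x * θ) * (cos (k * θ) * f θ) =
      (cos ((x - k : ℤ) * θ) * f θ + cos ((x + k : ℤ) * θ) * f θ) / 2 := by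
    push_cast
    rw [sub_mul, add_mul, cos_sub, cos_add]
    ring
  simp only [cosCoeff, hprod, intervalIntegral.integral_div]
  rw [intervalIntegral.integral_add (Continuous.intervalIntegrable (by fun_prop) _ _)
    (Continuous.intervalIntegrable (by fun_prop) _ _)]

theorem cosCoeff_sum_mul {ι : Type*} (s : Finset ι) (c : ι → ℝ) {g : ι → ℝ → ℝ}
    (hg : ∀ i ∈ s, Continuous (g i)) (x : ℤ) :
    cosCoeff (fun θ => ∑ i ∈ s, c i * g i θ) x = ∑ i ∈ s, c i * cosCoeff (g i) x := by
  simp only [cosCoeff, mul_sum, mul_left_comm (cos _)]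
  rw [intervalIntegral.integral_finsetSum fun i hi =>
    have := hg i hi; Continuous.intervalIntegrable (by fun_prop) _ _]
  simp only [intervalIntegral.integral_const_mul]

noncomputable def cosPoly (m : ℕ) (r : ℕ → ℝ) (θ : ℝ) : ℝ :=
  ∑ k ∈ Icc 1 m, r k * cos (k * θ)

@[fun_prop]
theorem continuous_cosPoly (m : ℕ) (r : ℕ → ℝ) : Continuous (cosPoly m r) := by
  unfold cosPoly
  fun_prop

theorem cosCoeff_cosPoly_pow_nonneg {m : ℕ} {r : ℕ → ℝ} (hr : ∀ k ∈ Icc 1 m, 0 ≤ r k) (n : ℕ)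
    (x : ℤ) : 0 ≤ cosCoeff (fun θ => cosPoly m r θ ^ n) x := by
  induction n generalizing x with
  | zero => simpa using cosCoeff_one_nonneg x
  | succ n ih =>
    have hpow : (fun θ => cosPoly m r θ ^ (n + 1)) =
        fun θ => ∑ k ∈ Icc 1 m, r k * (cos ((k : ℤ) * θ) * cosPoly m r θ ^ n) := by
      ext θ
      simp only [pow_succ', cosPoly, sum_mul, mul_assoc, Int.cast_natCast]
    rw [hpow, cosCoeff_sum_mul _ _ (fun _ _ => by fun_prop)]
    refine sum_nonneg fun k hk => mul_nonneg (hr k hk) ?_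
    rw [cosCoeff_cos_mul (by fun_prop)]
    have := ih (x - k)
    have := ih (x + k)
    positivity

theorem phiFn_eq_sub_cosPoly (m : ℕ) (r : ℕ → ℝ) (θ : ℝ) :
    phiFn m r θ = ∑ k ∈ Icc 1 m, r k - cosPoly m r θ := by
  simp only [phiFn, cosPoly, ← sum_sub_distrib, mul_sub, mul_one]

theorem hk_eq_cosCoeff (m : ℕ) (r : ℕ → ℝ) (t : ℝ) (x : ℤ) :
    hk m r t x = (2 * π)⁻¹ *
      (exp (-(t * ∑ k ∈ Icc 1 m, r k)) * cosCoeff (fun θ => exp (t * cosPoly m r θ)) x) := by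
  have hintegrand (θ : ℝ) :
      Complex.exp (-(x : ℂ) * Complex.I * θ) * Complex.exp (-(t : ℂ) * (phiFn m r θ : ℝ)) =
        ((exp (-(t * phiFn m r θ)) : ℝ) : ℂ) * Complex.exp ((-(x * θ) : ℝ) * Complex.I) := by
    push_cast
    ring_nf
  have hre (θ : ℝ) : (((exp (-(t * phiFn m r θ)) : ℝ) : ℂ) *
      Complex.exp ((-(x * θ) : ℝ) * Complex.I)).re =
        exp (-(t * ∑ k ∈ Icc 1 m, r k)) * (cos (x * θ) * exp (t * cosPoly m r θ)) := by
    rw [Complex.re_ofReal_mul, Complex.exp_ofReal_mul_I_re, cos_neg, phiFn_eq_sub_cosPoly,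
      show -(t * (∑ k ∈ Icc 1 m, r k - cosPoly m r θ)) =
        -(t * ∑ k ∈ Icc 1 m, r k) + t * cosPoly m r θ by ring, exp_add]
    ring
  have hcont : Continuous fun θ : ℝ => ((exp (-(t * phiFn m r θ)) : ℝ) : ℂ) *
      Complex.exp ((-(x * θ) : ℝ) * Complex.I) := by
    simp only [phiFn_eq_sub_cosPoly]
    fun_prop
  rw [hk, show (2 * (π : ℂ))⁻¹ = (((2 * π)⁻¹ : ℝ) : ℂ) by push_cast; rfl, Complex.re_ofReal_mul]
  simp_rw [hintegrand]
  have hre_integral := Complex.reCLM.intervalIntegral_comp_comm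
    (hcont.intervalIntegrable (μ := MeasureTheory.volume) (-π) π)
  simp only [Complex.reCLM_apply] at hre_integral
  rw [← hre_integral]
  simp only [hre, intervalIntegral.integral_const_mul, cosCoeff]

theorem stmt6_general (m : ℕ) (r : ℕ → ℝ) (hr : ∀ k ∈ Finset.Icc 1 m, 0 < r k) :
    ∃ C : ℝ, ∀ t t' : ℝ, 0 ≤ t → t ≤ t' → ∀ x : ℤ,
      hk m r t x ≤ Real.exp (C * (t' - t)) * hk m r t' x := by
  set R := ∑ k ∈ Icc 1 m, r k
  refine ⟨R, fun t t' ht htt' x => ?_⟩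
  have hmono : cosCoeff (fun θ => exp (t * cosPoly m r θ)) x ≤
      cosCoeff (fun θ => exp (t' * cosPoly m r θ)) x :=
    monotoneOn_intervalIntegral_mul_exp (continuous_cosPoly m r) (by fun_prop)
      (cosCoeff_cosPoly_pow_nonneg (fun k hk => (hr k hk).le) · x) ht (ht.trans htt') htt'
  rw [hk_eq_cosCoeff, hk_eq_cosCoeff]
  calc (2 * π)⁻¹ * (exp (-(t * R)) * cosCoeff (fun θ => exp (t * cosPoly m r θ)) x)
      ≤ (2 * π)⁻¹ * (exp (-(t * R)) * cosCoeff (fun θ => exp (t' * cosPoly m r θ)) x) := by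
        gcongr
    _ = exp (R * (t' - t)) *
        ((2 * π)⁻¹ * (exp (-(t' * R)) * cosCoeff (fun θ => exp (t' * cosPoly m r θ)) x)) := by
        rw [show -(t * R) = R * (t' - t) + -(t' * R) by ring, exp_add]
        ring

theorem stmt6 (m : ℕ) (hm : 1 ≤ m) (r : ℕ → ℝ) (hr : ∀ k ∈ Finset.Icc 1 m, 0 < r k) :
    ∃ C : ℝ, ∀ t t' : ℝ, 0 ≤ t → t ≤ t' → ∀ x : ℤ,
      hk m r t x ≤ Real.exp (C * (t' - t)) * hk m r t' x :=
  stmt6_general m r hr
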